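/- Let N > 100 and let (x_1, …, x_N) be the unique strictly decreasing zero-mean solution of the MIW recursion. Let μ* be the probability measure on ℝ with density p*(x) = S_n/(N−1) for x ∈ [x_{n+1}, x_n), 1 ≤ n ≤ N−1, and p*(x) = 0 outside [x_N, x_1). Then sup_{z ∈ ℝ} |μ*((−∞, z]) − Φ(z)| ≤ 52.5/N, where Φ is the standard normal cumulative distribution function. -/

import Mathlib

open MeasureTheory Set Filter

noncomputable section

/-- Partial sums `S_n = x_1 + ⋯ + x_n`. -/
def Ssum (x : ℕ → ℝ) (n : ℕ) : ℝ := ∑ i ∈ Finset.Icc 1 n, x i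

/-- `x` is a solution of the MIW recursion
`x_{n+1} = x_n - 1/(x_1 + ⋯ + x_n)` for `1 ≤ n ≤ N - 1`. -/
def IsMIW (N : ℕ) (x : ℕ → ℝ) : Prop :=
  ∀ n, 1 ≤ n → n ≤ N - 1 → Ssum x n ≠ 0 ∧ x (n + 1) = x n - 1 / Ssum x n

/-- The standard normal cumulative distribution function
`Φ(w) = ∫_{-∞}^w (1/√(2π)) e^{-t²/2} dt`. -/
def Phi (w : ℝ) : ℝ :=
  ∫ t in Set.Iic w, (1 / Real.sqrt (2 * Real.pi)) * Real.exp (-t ^ 2 / 2)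




def phiG (w : ℝ) : ℝ := (1 / Real.sqrt (2 * Real.pi)) * Real.exp (-w ^ 2 / 2)

lemma sqrt2pi_pos : 0 < Real.sqrt (2 * Real.pi) :=
  Real.sqrt_pos.2 (by positivity)

lemma phiG_pos (w : ℝ) : 0 < phiG w := by
  unfold phiG; positivity

lemma phiG_nonneg (w : ℝ) : 0 ≤ phiG w := (phiG_pos w).le

lemma continuous_phiG : Continuous phiG := by
  unfold phiG; continuity

lemma integrable_phiG : Integrable phiG := by
  have h := integrable_exp_neg_mul_sq (b := (1/2 : ℝ)) (by norm_num)
  have : phiG = fun w => (1 / Real.sqrt (2 * Real.pi)) * Real.exp (-(1/2) * w ^ 2) := by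
    funext w; unfold phiG; ring_nf
  rw [this]
  exact h.const_mul _

lemma integral_phiG : ∫ w, phiG w = 1 := by
  have h : (fun w : ℝ => phiG w) = fun w => (1 / Real.sqrt (2 * Real.pi)) * Real.exp (-(1/2) * w ^ 2) := by
    funext w; unfold phiG; ring_nf
  rw [h, MeasureTheory.integral_const_mul, integral_gaussian]
  have : Real.pi / (1/2) = 2 * Real.pi := by ring
  rw [this]
  field_simp

lemma Phi_eq (w : ℝ) : Phi w = ∫ t in Set.Iic w, phiG t := rfl

lemma Phi_nonneg (w : ℝ) : 0 ≤ Phi w := by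
  rw [Phi_eq]
  exact setIntegral_nonneg measurableSet_Iic fun t _ => phiG_nonneg t

lemma Phi_le_one (w : ℝ) : Phi w ≤ 1 := by
  rw [Phi_eq, ← integral_phiG]
  exact setIntegral_le_integral integrable_phiG (Filter.Eventually.of_forall fun t => phiG_nonneg t)

lemma Phi_mono : Monotone Phi := by
  intro a b hab
  rw [Phi_eq, Phi_eq]
  exact setIntegral_mono_set integrable_phiG.integrableOn
    (Filter.Eventually.of_forall fun t => phiG_nonneg t)
    (HasSubset.Subset.eventuallyLE (Set.Iic_subset_Iic.2 hab))

lemma one_sub_Phi (w : ℝ) : 1 - Phi w = ∫ t in Set.Ioi w, phiG t := by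
  have h := MeasureTheory.integral_add_compl (measurableSet_Iic (a := w)) integrable_phiG
  rw [Set.compl_Iic] at h
  rw [Phi_eq]
  rw [← integral_phiG, ← h]
  ring





lemma tendsto_sq_atBot : Tendsto (fun w : ℝ => w ^ 2) atBot atTop := by
  have h := (tendsto_pow_atTop (α := ℝ) (n := 2) two_ne_zero).comp tendsto_neg_atBot_atTop
  have : ((fun x : ℝ => x ^ 2) ∘ Neg.neg) = fun w : ℝ => w ^ 2 := by
    funext w; simp [neg_pow]
  rwa [this] at h

lemma tendsto_negsqhalf_atTop : Tendsto (fun w : ℝ => -w ^ 2 / 2) atTop atBot := by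
  have h := (tendsto_pow_atTop (α := ℝ) (n := 2) two_ne_zero).const_mul_atTop_of_neg
    (r := -1/2) (by norm_num)
  have : (fun x : ℝ => -1/2 * x ^ 2) = fun w : ℝ => -w ^ 2 / 2 := by funext w; ring
  rwa [this] at h

lemma tendsto_negsqhalf_atBot : Tendsto (fun w : ℝ => -w ^ 2 / 2) atBot atBot := by
  have h := tendsto_sq_atBot.const_mul_atTop_of_neg (r := (-1/2 : ℝ)) (by norm_num)
  have : (fun x : ℝ => -1/2 * x ^ 2) = fun w : ℝ => -w ^ 2 / 2 := by funext w; ring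
  rwa [this] at h

lemma tendsto_phiG_atTop : Tendsto phiG atTop (nhds 0) := by
  have h : Tendsto (fun w : ℝ => Real.exp (-w ^ 2 / 2)) atTop (nhds 0) :=
    Real.tendsto_exp_comp_nhds_zero.2 tendsto_negsqhalf_atTop
  have h2 := h.const_mul (1 / Real.sqrt (2 * Real.pi))
  rw [mul_zero] at h2
  exact h2

lemma tendsto_phiG_atBot : Tendsto phiG atBot (nhds 0) := by
  have h : Tendsto (fun w : ℝ => Real.exp (-w ^ 2 / 2)) atBot (nhds 0) :=
    Real.tendsto_exp_comp_nhds_zero.2 tendsto_negsqhalf_atBot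
  have h2 := h.const_mul (1 / Real.sqrt (2 * Real.pi))
  rw [mul_zero] at h2
  exact h2

lemma hasDerivAt_Phi (w : ℝ) : HasDerivAt Phi (phiG w) w := by
  have key : Phi = fun u => Phi 0 + ∫ t in (0:ℝ)..u, phiG t := by
    funext u
    have := intervalIntegral.integral_Iic_sub_Iic (a := 0) (b := u)
      (f := phiG) (μ := volume) integrable_phiG.integrableOn integrable_phiG.integrableOn
    show (∫ t in Set.Iic u, phiG t) = _
    rw [← this]
    show Phi u = Phi 0 + (Phi u - Phi 0)
    ring
  rw [key]
  exact (intervalIntegral.integral_hasDerivAt_right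
    (integrable_phiG.intervalIntegrable)
    (continuous_phiG.stronglyMeasurableAtFilter volume (nhds w))
    continuous_phiG.continuousAt).const_add _

lemma hasDerivAt_negphiG (s : ℝ) : HasDerivAt (fun t => -phiG t) (s * phiG s) s := by
  have h1 : HasDerivAt (fun t : ℝ => -t ^ 2 / 2) (-s) s := by
    have := ((hasDerivAt_pow 2 s).neg).div_const 2
    simpa using this.congr_deriv (by ring)
  have h2 : HasDerivAt (fun t : ℝ => Real.exp (-t ^ 2 / 2)) (Real.exp (-s ^ 2 / 2) * (-s)) s :=
    h1.exp
  have h3 := (h2.const_mul (1 / Real.sqrt (2 * Real.pi))).neg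
  have : -(1 / Real.sqrt (2 * Real.pi) * (Real.exp (-s ^ 2 / 2) * -s)) = s * phiG s := by
    unfold phiG; ring
  rw [this] at h3
  exact h3





lemma hasDerivAt_phiG (s : ℝ) : HasDerivAt phiG (-(s * phiG s)) s := by
  exact (hasDerivAt_negphiG s).neg.congr_of_eventuallyEq (Filter.Eventually.of_forall fun t => by simp)

/-- The helper function `G` for the Mills-ratio lower bound. -/
def GG (s : ℝ) : ℝ := -(s * phiG s) / (1 + s ^ 2)

def GG' (s : ℝ) : ℝ := phiG s * (s ^ 4 + 2 * s ^ 2 - 1) / (1 + s ^ 2) ^ 2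

lemma one_add_sq_pos (s : ℝ) : (0:ℝ) < 1 + s ^ 2 := by positivity

lemma hasDerivAt_GG (s : ℝ) : HasDerivAt GG (GG' s) s := by
  have hu : HasDerivAt (fun t => -(t * phiG t)) ((s ^ 2 - 1) * phiG s) s := by
    have := ((hasDerivAt_id s).mul (hasDerivAt_phiG s)).neg
    exact this.congr_deriv (by simp only [id_eq]; ring)
  have hv : HasDerivAt (fun t : ℝ => 1 + t ^ 2) (2 * s) s := by
    simpa using ((hasDerivAt_pow 2 s).const_add 1)
  have hne : (1 + s ^ 2) ≠ 0 := (one_add_sq_pos s).ne'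
  have := hu.div hv hne
  exact this.congr_deriv (by unfold GG'; field_simp; ring)

lemma abs_GG'_le (s : ℝ) : |GG' s| ≤ phiG s := by
  unfold GG'
  rw [abs_div, abs_mul, abs_of_nonneg (phiG_nonneg s), abs_of_nonneg (by positivity : (0:ℝ) ≤ (1 + s ^ 2) ^ 2)]
  rw [div_le_iff₀ (by positivity)]
  have h1 : |s ^ 4 + 2 * s ^ 2 - 1| ≤ (1 + s ^ 2) ^ 2 := by
    rw [abs_le]; constructor <;> nlinarith [sq_nonneg s, sq_nonneg (s^2)]
  calc phiG s * |s ^ 4 + 2 * s ^ 2 - 1| ≤ phiG s * (1 + s ^ 2) ^ 2 :=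
        mul_le_mul_of_nonneg_left h1 (phiG_nonneg s)
    _ = phiG s * (1 + s ^ 2) ^ 2 := rfl

lemma GG'_le_phiG (s : ℝ) : GG' s ≤ phiG s := (abs_le.1 (abs_GG'_le s)).2

lemma abs_GG_le (s : ℝ) : |GG s| ≤ phiG s := by
  unfold GG
  rw [abs_div, abs_neg, abs_mul, abs_of_nonneg (phiG_nonneg s),
    abs_of_nonneg (one_add_sq_pos s).le, div_le_iff₀ (one_add_sq_pos s)]
  have h1 : |s| ≤ 1 + s ^ 2 := by nlinarith [abs_nonneg s, sq_abs s, sq_nonneg (|s| - 1)]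
  calc |s| * phiG s ≤ (1 + s ^ 2) * phiG s := mul_le_mul_of_nonneg_right h1 (phiG_nonneg s)
    _ = phiG s * (1 + s ^ 2) := by ring

lemma continuous_GG : Continuous GG := by
  unfold GG
  exact ((continuous_id.mul continuous_phiG).neg).div (by continuity)
    (fun s => (one_add_sq_pos s).ne')

lemma continuous_GG' : Continuous GG' := by
  unfold GG'
  exact (continuous_phiG.mul (by continuity)).div (by continuity)
    (fun s => (by positivity : ((1:ℝ) + s ^ 2) ^ 2 ≠ 0))

lemma integrableOn_GG' (S : Set ℝ) (hS : MeasurableSet S) : IntegrableOn GG' S := by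
  apply Integrable.mono' (integrable_phiG.integrableOn (s := S))
    (continuous_GG'.aestronglyMeasurable.restrict)
  exact Filter.Eventually.of_forall fun s => (abs_GG'_le s)

lemma tendsto_GG_atBot : Tendsto GG atBot (nhds 0) :=
  squeeze_zero_norm' (Filter.Eventually.of_forall fun s => by
    rw [Real.norm_eq_abs]; exact abs_GG_le s) tendsto_phiG_atBot

lemma tendsto_GG_atTop : Tendsto GG atTop (nhds 0) :=
  squeeze_zero_norm' (Filter.Eventually.of_forall fun s => by
    rw [Real.norm_eq_abs]; exact abs_GG_le s) tendsto_phiG_atTop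

lemma integral_GG'_Iic (w : ℝ) : ∫ s in Set.Iic w, GG' s = GG w := by
  have := MeasureTheory.integral_Iic_of_hasDerivAt_of_tendsto
    (f := GG) (f' := GG') (a := w) (m := 0)
    continuous_GG.continuousWithinAt
    (fun s _ => hasDerivAt_GG s)
    (integrableOn_GG' _ measurableSet_Iic)
    tendsto_GG_atBot
  simpa using this

lemma integral_GG'_Ioi (w : ℝ) : ∫ s in Set.Ioi w, GG' s = -GG w := by
  have := MeasureTheory.integral_Ioi_of_hasDerivAt_of_tendsto
    (f := GG) (f' := GG') (a := w) (m := 0)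
    continuous_GG.continuousWithinAt
    (fun s _ => hasDerivAt_GG s)
    (integrableOn_GG' _ measurableSet_Ioi)
    tendsto_GG_atTop
  simpa using this

/-- Mills-type bound: `(1+w²)Φ(w) + wφ(w) ≥ 0`. -/
lemma I3 (w : ℝ) : 0 ≤ (1 + w ^ 2) * Phi w + w * phiG w := by
  have h1 : GG w ≤ Phi w := by
    rw [← integral_GG'_Iic w, Phi_eq]
    exact setIntegral_mono_on (integrableOn_GG' _ measurableSet_Iic)
      integrable_phiG.integrableOn measurableSet_Iic (fun s _ => GG'_le_phiG s)
  have h2 : (1 + w ^ 2) * GG w + w * phiG w = 0 := by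
    unfold GG; field_simp; ring
  nlinarith [mul_le_mul_of_nonneg_left h1 (one_add_sq_pos w).le]

/-- Mills-type bound: `(1+w²)(1-Φ(w)) - wφ(w) ≥ 0`. -/
lemma I4 (w : ℝ) : 0 ≤ (1 + w ^ 2) * (1 - Phi w) - w * phiG w := by
  have h1 : -GG w ≤ 1 - Phi w := by
    rw [← integral_GG'_Ioi w, one_sub_Phi]
    exact setIntegral_mono_on (integrableOn_GG' _ measurableSet_Ioi)
      integrable_phiG.integrableOn measurableSet_Ioi (fun s _ => GG'_le_phiG s)
  have h2 : (1 + w ^ 2) * (-GG w) - w * phiG w = 0 := by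
    unfold GG; field_simp; ring
  nlinarith [mul_le_mul_of_nonneg_left h1 (one_add_sq_pos w).le]





def HH (s : ℝ) : ℝ := -phiG s / s
def HH' (s : ℝ) : ℝ := phiG s * (1 + 1 / s ^ 2)

lemma hasDerivAt_HH (s : ℝ) (hs : s ≠ 0) : HasDerivAt HH (HH' s) s := by
  have := (hasDerivAt_negphiG s).div (hasDerivAt_id s) hs
  exact this.congr_deriv (by unfold HH'; simp only [id_eq]; field_simp; ring)

lemma continuousOn_HH' (S : Set ℝ) (hS : ∀ s ∈ S, s ≠ 0) : ContinuousOn HH' S := by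
  unfold HH'
  exact continuous_phiG.continuousOn.mul (ContinuousOn.add continuousOn_const
    (ContinuousOn.div continuousOn_const ((continuous_pow 2).continuousOn)
      (fun s hs => pow_ne_zero 2 (hS s hs))))

lemma HH'_nonneg (s : ℝ) : 0 ≤ HH' s := by
  unfold HH'
  exact mul_nonneg (phiG_nonneg s) (by linarith [one_div_nonneg.2 (sq_nonneg s)])

lemma phiG_le_HH' (s : ℝ) : phiG s ≤ HH' s := by
  unfold HH'
  nlinarith [phiG_nonneg s, mul_nonneg (phiG_nonneg s) (by positivity : (0:ℝ) ≤ 1 / s ^ 2)]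

lemma tendsto_HH_atBot : Tendsto HH atBot (nhds 0) := by
  apply squeeze_zero_norm' (a := phiG)
  · filter_upwards [eventually_le_atBot (-1 : ℝ)] with s hs
    have hs1 : (1:ℝ) ≤ |s| := by rw [abs_of_nonpos (by linarith)]; linarith
    have : |HH s| = phiG s / |s| := by
      unfold HH
      rw [abs_div, abs_neg, abs_of_nonneg (phiG_nonneg s)]
    rw [Real.norm_eq_abs, this]
    rw [div_le_iff₀ (by linarith : (0:ℝ) < |s|)]
    nlinarith [phiG_nonneg s]
  · exact tendsto_phiG_atBot

lemma tendsto_HH_atTop : Tendsto HH atTop (nhds 0) := by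
  apply squeeze_zero_norm' (a := phiG)
  · filter_upwards [eventually_ge_atTop (1 : ℝ)] with s hs
    have hs1 : (1:ℝ) ≤ |s| := by rw [abs_of_nonneg (by linarith)]; linarith
    have : |HH s| = phiG s / |s| := by
      unfold HH
      rw [abs_div, abs_neg, abs_of_nonneg (phiG_nonneg s)]
    rw [Real.norm_eq_abs, this]
    rw [div_le_iff₀ (by linarith : (0:ℝ) < |s|)]
    nlinarith [phiG_nonneg s]
  · exact tendsto_phiG_atTop

lemma integrableOn_HH'_Iic (w : ℝ) (hw : w < 0) : IntegrableOn HH' (Set.Iic w) := by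
  apply Integrable.mono' ((integrable_phiG.mul_const (1 + 1 / w ^ 2)).integrableOn (s := Set.Iic w))
  · exact (continuousOn_HH' _ (fun s hs => by
      have : s ≤ w := hs
      exact ne_of_lt (lt_of_le_of_lt this hw))).aestronglyMeasurable measurableSet_Iic
  · rw [MeasureTheory.ae_restrict_iff' measurableSet_Iic]
    apply Filter.Eventually.of_forall
    intro s hs
    have hsw : s ≤ w := hs
    have hs0 : s < 0 := lt_of_le_of_lt hsw hw
    rw [Real.norm_eq_abs, abs_of_nonneg (HH'_nonneg s)]
    unfold HH'
    have h2 : 1 / s ^ 2 ≤ 1 / w ^ 2 := by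
      apply one_div_le_one_div_of_le (by nlinarith : (0:ℝ) < w ^ 2)
      nlinarith
    nlinarith [phiG_nonneg s]

lemma integrableOn_HH'_Ioi (w : ℝ) (hw : 0 < w) : IntegrableOn HH' (Set.Ioi w) := by
  apply Integrable.mono' ((integrable_phiG.mul_const (1 + 1 / w ^ 2)).integrableOn (s := Set.Ioi w))
  · exact (continuousOn_HH' _ (fun s hs => by
      have : w < s := hs
      exact ne_of_gt (lt_trans hw this))).aestronglyMeasurable measurableSet_Ioi
  · rw [MeasureTheory.ae_restrict_iff' measurableSet_Ioi]
    apply Filter.Eventually.of_forall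
    intro s hs
    have hsw : w < s := hs
    have hs0 : 0 < s := lt_trans hw hsw
    rw [Real.norm_eq_abs, abs_of_nonneg (HH'_nonneg s)]
    unfold HH'
    have h2 : 1 / s ^ 2 ≤ 1 / w ^ 2 := by
      apply one_div_le_one_div_of_le (by nlinarith : (0:ℝ) < w ^ 2)
      nlinarith
    nlinarith [phiG_nonneg s]

/-- Gaussian tail bound, left: `-φ(w) ≤ w Φ(w)` for all `w`. -/
lemma tail_left (w : ℝ) : -phiG w ≤ w * Phi w := by
  rcases le_or_gt 0 w with hw | hw
  · have : 0 ≤ w * Phi w := mul_nonneg hw (Phi_nonneg w)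
    linarith [phiG_nonneg w]
  · have hint : ∫ s in Set.Iic w, HH' s = HH w := by
      have := MeasureTheory.integral_Iic_of_hasDerivAt_of_tendsto
        (f := HH) (f' := HH') (a := w) (m := 0)
        ((continuous_phiG.neg.continuousAt.div continuousAt_id hw.ne).continuousWithinAt)
        (fun s hs => hasDerivAt_HH s (ne_of_lt (lt_trans hs hw)))
        (integrableOn_HH'_Iic w hw)
        tendsto_HH_atBot
      simpa using this
    have hPhi_le : Phi w ≤ HH w := by
      rw [← hint, Phi_eq]
      exact setIntegral_mono_on integrable_phiG.integrableOn
        (integrableOn_HH'_Iic w hw) measurableSet_Iic (fun s _ => phiG_le_HH' s)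
    have := mul_le_mul_of_nonpos_left hPhi_le (le_of_lt hw)
    have hw0 : w ≠ 0 := hw.ne
    have heq : w * HH w = -phiG w := by
      unfold HH; field_simp; try ring
    linarith [this, heq ▸ this]

/-- Gaussian tail bound, right: `w (1 - Φ(w)) ≤ φ(w)` for all `w`. -/
lemma tail_right (w : ℝ) : w * (1 - Phi w) ≤ phiG w := by
  rcases le_or_gt w 0 with hw | hw
  · have h1 : 0 ≤ 1 - Phi w := by linarith [Phi_le_one w]
    have : w * (1 - Phi w) ≤ 0 := mul_nonpos_of_nonpos_of_nonneg hw h1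
    linarith [phiG_nonneg w]
  · have hint : ∫ s in Set.Ioi w, HH' s = -HH w := by
      have := MeasureTheory.integral_Ioi_of_hasDerivAt_of_tendsto
        (f := HH) (f' := HH') (a := w) (m := 0)
        ((continuous_phiG.neg.continuousAt.div continuousAt_id hw.ne').continuousWithinAt)
        (fun s hs => hasDerivAt_HH s (ne_of_gt (lt_trans hw hs)))
        (integrableOn_HH'_Ioi w hw)
        tendsto_HH_atTop
      simpa using this
    have hPhi_le : 1 - Phi w ≤ -HH w := by
      rw [← hint, one_sub_Phi]
      exact setIntegral_mono_on integrable_phiG.integrableOn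
        (integrableOn_HH'_Ioi w hw) measurableSet_Ioi (fun s _ => phiG_le_HH' s)
    have := mul_le_mul_of_nonneg_left hPhi_le (le_of_lt hw)
    have hw0 : w ≠ 0 := hw.ne'
    have heq : w * (-HH w) = phiG w := by
      unfold HH; field_simp; try ring
    linarith [heq ▸ this]





/-- `u w = √(2π) e^{w²/2}`, the reciprocal of the Gaussian density. -/
def uG (w : ℝ) : ℝ := Real.sqrt (2 * Real.pi) * Real.exp (w ^ 2 / 2)

lemma uG_pos (w : ℝ) : 0 < uG w := by unfold uG; positivity

lemma uG_mul_phiG (w : ℝ) : uG w * phiG w = 1 := by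
  unfold uG phiG
  rw [show Real.sqrt (2*Real.pi) * Real.exp (w^2/2) * (1/Real.sqrt (2*Real.pi) * Real.exp (-w^2/2))
      = (Real.sqrt (2*Real.pi) * (1/Real.sqrt (2*Real.pi))) * (Real.exp (w^2/2) * Real.exp (-w^2/2)) from by ring]
  rw [← Real.exp_add, mul_one_div, div_self sqrt2pi_pos.ne',
    show w^2/2 + -w^2/2 = 0 by ring, Real.exp_zero, mul_one]

lemma hasDerivAt_uG (w : ℝ) : HasDerivAt uG (w * uG w) w := by
  have h1 : HasDerivAt (fun t : ℝ => t ^ 2 / 2) w w := by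
    simpa using (hasDerivAt_pow 2 w).div_const 2
  have h2 := (h1.exp).const_mul (Real.sqrt (2 * Real.pi))
  exact h2.congr_deriv (by unfold uG; ring)

/-- Left branch of Stein solution. -/
def gL (z w : ℝ) : ℝ := uG w * (Phi w * (1 - Phi z))
/-- Right branch of Stein solution. -/
def gR (z w : ℝ) : ℝ := uG w * (Phi z * (1 - Phi w))
/-- The Stein solution `f_z`. -/
def fS (z w : ℝ) : ℝ := if w ≤ z then gL z w else gR z w
/-- `h_z(w) = w f_z(w)`. -/
def hS (z w : ℝ) : ℝ := w * fS z w

lemma gL_eq_gR (z : ℝ) : gL z z = gR z z := by unfold gL gR; ring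

lemma hasDerivAt_gL (z w : ℝ) : HasDerivAt (gL z) (w * gL z w + (1 - Phi z)) w := by
  have h := (hasDerivAt_uG w).mul ((hasDerivAt_Phi w).mul_const (1 - Phi z))
  have hu := uG_mul_phiG w
  exact h.congr_deriv (by unfold gL; linear_combination (1 - Phi z) * hu)

lemma hasDerivAt_gR (z w : ℝ) : HasDerivAt (gR z) (w * gR z w - Phi z) w := by
  have hd : HasDerivAt (fun t => Phi z * (1 - Phi t)) (Phi z * (-phiG w)) w := by
    exact (((hasDerivAt_Phi w).const_sub 1)).const_mul (Phi z)
  have h := (hasDerivAt_uG w).mul hd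
  have hu := uG_mul_phiG w
  exact h.congr_deriv (by unfold gR; linear_combination (-Phi z) * hu)

lemma continuous_uG : Continuous uG := by unfold uG; continuity

lemma continuous_Phi : Continuous Phi := by
  have : Differentiable ℝ Phi := fun w => (hasDerivAt_Phi w).differentiableAt
  exact this.continuous

lemma continuous_gL (z : ℝ) : Continuous (gL z) := by
  unfold gL; exact continuous_uG.mul ((continuous_Phi.mul continuous_const))

lemma continuous_gR (z : ℝ) : Continuous (gR z) := by
  unfold gR
  exact continuous_uG.mul (continuous_const.mul (continuous_const.sub continuous_Phi))

lemma continuous_fS (z : ℝ) : Continuous (fS z) := by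
  unfold fS
  exact Continuous.if_le (continuous_gL z) (continuous_gR z) continuous_id continuous_const
    (fun w hw => by rw [hw]; exact gL_eq_gR z)

lemma continuous_hS (z : ℝ) : Continuous (hS z) := continuous_id.mul (continuous_fS z)

lemma fS_nonneg (z w : ℝ) : 0 ≤ fS z w := by
  unfold fS gL gR
  split <;>
  · apply mul_nonneg (uG_pos w).le
    apply mul_nonneg
    · first
        | exact Phi_nonneg w
        | exact Phi_nonneg z
    · first
        | linarith [Phi_le_one z]
        | linarith [Phi_le_one w]

lemma fS_le_left (z w : ℝ) : fS z w ≤ uG w * Phi w := by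
  unfold fS
  by_cases h : w ≤ z
  · rw [if_pos h]; unfold gL
    apply mul_le_mul_of_nonneg_left _ (uG_pos w).le
    nlinarith [Phi_nonneg z, Phi_nonneg w]
  · rw [if_neg h]; unfold gR
    apply mul_le_mul_of_nonneg_left _ (uG_pos w).le
    have h1 : Phi z ≤ Phi w := Phi_mono (le_of_not_ge h)
    nlinarith [Phi_nonneg z, Phi_le_one w, Phi_nonneg w]

lemma fS_le_right (z w : ℝ) : fS z w ≤ uG w * (1 - Phi w) := by
  unfold fS
  by_cases h : w ≤ z
  · rw [if_pos h]; unfold gL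
    apply mul_le_mul_of_nonneg_left _ (uG_pos w).le
    have h1 : Phi w ≤ Phi z := Phi_mono h
    nlinarith [Phi_nonneg w, Phi_le_one z, Phi_le_one w]
  · rw [if_neg h]; unfold gR
    apply mul_le_mul_of_nonneg_left _ (uG_pos w).le
    nlinarith [Phi_le_one z, Phi_le_one w, Phi_nonneg z]

/-- `|h_z| ≤ 1`. -/
lemma hS_le_one (z w : ℝ) : hS z w ≤ 1 := by
  unfold hS
  rcases le_or_gt 0 w with hw | hw
  · calc w * fS z w ≤ w * (uG w * (1 - Phi w)) :=
        mul_le_mul_of_nonneg_left (fS_le_right z w) hw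
      _ = uG w * (w * (1 - Phi w)) := by ring
      _ ≤ uG w * phiG w := mul_le_mul_of_nonneg_left (tail_right w) (uG_pos w).le
      _ = 1 := uG_mul_phiG w
  · have : w * fS z w ≤ 0 := mul_nonpos_of_nonpos_of_nonneg hw.le (fS_nonneg z w)
    linarith

lemma neg_one_le_hS (z w : ℝ) : -1 ≤ hS z w := by
  unfold hS
  rcases le_or_gt 0 w with hw | hw
  · have : 0 ≤ w * fS z w := mul_nonneg hw (fS_nonneg z w)
    linarith
  · calc (-1 : ℝ) = -(uG w * phiG w) := by rw [uG_mul_phiG w]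
      _ = uG w * (-phiG w) := by ring
      _ ≤ uG w * (w * Phi w) := mul_le_mul_of_nonneg_left (tail_left w) (uG_pos w).le
      _ = w * (uG w * Phi w) := by ring
      _ ≤ w * fS z w := by
          have := fS_le_left z w
          nlinarith










lemma hasDerivAt_wgL (z w : ℝ) :
    HasDerivAt (fun t => t * gL z t) (gL z w + w * (w * gL z w + (1 - Phi z))) w := by
  have := (hasDerivAt_id w).mul (hasDerivAt_gL z w)
  exact this.congr_deriv (by simp)

lemma hasDerivAt_wgR (z w : ℝ) :
    HasDerivAt (fun t => t * gR z t) (gR z w + w * (w * gR z w - Phi z)) w := by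
  have := (hasDerivAt_id w).mul (hasDerivAt_gR z w)
  exact this.congr_deriv (by simp)

lemma wgL_deriv_nonneg (z w : ℝ) (hz : Phi z ≤ 1) :
    0 ≤ gL z w + w * (w * gL z w + (1 - Phi z)) := by
  have key : gL z w + w * (w * gL z w + (1 - Phi z))
      = (1 - Phi z) * (uG w * ((1 + w ^ 2) * Phi w + w * phiG w)) := by
    unfold gL
    have hu := uG_mul_phiG w
    linear_combination (w * (Phi z - 1)) * hu
  rw [key]
  exact mul_nonneg (by linarith) (mul_nonneg (uG_pos w).le (I3 w))

lemma wgR_deriv_nonneg (z w : ℝ) :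
    0 ≤ gR z w + w * (w * gR z w - Phi z) := by
  have key : gR z w + w * (w * gR z w - Phi z)
      = Phi z * (uG w * ((1 + w ^ 2) * (1 - Phi w) - w * phiG w)) := by
    unfold gR
    have hu := uG_mul_phiG w
    linear_combination (Phi z * w) * hu
  rw [key]
  exact mul_nonneg (Phi_nonneg z) (mul_nonneg (uG_pos w).le (I4 w))

lemma monotone_hS (z : ℝ) : Monotone (hS z) := by
  have hL : MonotoneOn (hS z) (Set.Iic z) := by
    have hmono : MonotoneOn (fun t => t * gL z t) (Set.Iic z) := by
      apply monotoneOn_of_deriv_nonneg (convex_Iic z)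
        (Continuous.continuousOn (by exact continuous_id.mul (continuous_gL z)))
      · intro t _
        exact (hasDerivAt_wgL z t).differentiableAt.differentiableWithinAt
      · intro t _
        rw [(hasDerivAt_wgL z t).deriv]
        exact wgL_deriv_nonneg z t (Phi_le_one z)
    intro a ha b hb hab
    have ea : hS z a = a * gL z a := by unfold hS fS; rw [if_pos (show a ≤ z from ha)]
    have eb : hS z b = b * gL z b := by unfold hS fS; rw [if_pos (show b ≤ z from hb)]
    rw [ea, eb]; exact hmono ha hb hab
  have hR : MonotoneOn (hS z) (Set.Ici z) := by
    have hmono : MonotoneOn (fun t => t * gR z t) (Set.Ici z) := by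
      apply monotoneOn_of_deriv_nonneg (convex_Ici z)
        (Continuous.continuousOn (by exact continuous_id.mul (continuous_gR z)))
      · intro t _
        exact (hasDerivAt_wgR z t).differentiableAt.differentiableWithinAt
      · intro t _
        rw [(hasDerivAt_wgR z t).deriv]
        exact wgR_deriv_nonneg z t
    intro a ha b hb hab
    have ea : hS z a = a * gR z a := by
      unfold hS fS
      rcases eq_or_lt_of_le (Set.mem_Ici.1 ha) with h | h
      · rw [← h, if_pos le_rfl, gL_eq_gR]
      · rw [if_neg (not_le.2 h)]
    have eb : hS z b = b * gR z b := by
      unfold hS fS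
      rcases eq_or_lt_of_le (Set.mem_Ici.1 hb) with h | h
      · rw [← h, if_pos le_rfl, gL_eq_gR]
      · rw [if_neg (not_le.2 h)]
    rw [ea, eb]; exact hmono ha hb hab
  intro a b hab
  rcases le_total b z with hbz | hbz
  · exact hL (Set.mem_Iic.2 (le_trans hab hbz)) (Set.mem_Iic.2 hbz) hab
  · rcases le_total a z with haz | haz
    · exact le_trans (hL (Set.mem_Iic.2 haz) (Set.mem_Iic.2 le_rfl) haz)
        (hR (Set.mem_Ici.2 le_rfl) (Set.mem_Ici.2 hbz) hbz)
    · exact hR (Set.mem_Ici.2 haz) (Set.mem_Ici.2 hbz) hab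

/-- FTC for the Stein solution. -/
lemma ftc_fS (z a b : ℝ) (hab : a ≤ b) :
    ∫ w in a..b, (hS z w + Set.indicator (Set.Iio z) (fun _ => (1:ℝ)) w - Phi z)
      = fS z b - fS z a := by
  set F' : ℝ → ℝ := fun w => hS z w + Set.indicator (Set.Iio z) (fun _ => (1:ℝ)) w - Phi z
    with hF'
  have hder : ∀ t ∈ Set.Ioo a b, HasDerivWithinAt (fS z) (F' t) (Set.Ioi t) t := by
    intro t _
    rcases lt_or_ge t z with ht | ht
    · have hev : fS z =ᶠ[nhds t] gL z := by
        filter_upwards [Iio_mem_nhds ht] with y hy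
        unfold fS; rw [if_pos (le_of_lt hy)]
      have := (hasDerivAt_gL z t).congr_of_eventuallyEq hev
      have heq : F' t = t * gL z t + (1 - Phi z) := by
        rw [hF']
        simp only [Set.indicator_of_mem (Set.mem_Iio.2 ht)]
        have : hS z t = t * gL z t := by unfold hS fS; rw [if_pos ht.le]
        rw [this]; ring
      rw [heq]
      exact this.hasDerivWithinAt
    · have hfg : ∀ y ∈ Set.Ioi t, fS z y = gR z y := by
        intro y hy
        unfold fS
        rw [if_neg (not_le.2 (lt_of_le_of_lt ht hy))]
      have hfgt : fS z t = gR z t := by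
        unfold fS
        rcases eq_or_lt_of_le ht with h | h
        · rw [← h, if_pos le_rfl]; exact gL_eq_gR z
        · rw [if_neg (not_le.2 h)]
      have := ((hasDerivAt_gR z t).hasDerivWithinAt (s := Set.Ioi t)).congr hfg hfgt
      have heq : F' t = t * gR z t - Phi z := by
        rw [hF']
        simp only [Set.indicator_of_notMem (by simp [Set.mem_Iio, not_lt, ht] : t ∉ Set.Iio z)]
        have : hS z t = t * gR z t := by unfold hS; rw [hfgt]
        rw [this]; ring
      rw [heq]
      exact this
  have hint : IntervalIntegrable F' volume a b := by
    apply IntervalIntegrable.sub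
    apply IntervalIntegrable.add
    · exact (continuous_hS z).intervalIntegrable a b
    · rw [intervalIntegrable_iff]
      apply MeasureTheory.Integrable.indicator _ measurableSet_Iio
      exact integrableOn_const measure_Ioc_lt_top.ne
    · exact intervalIntegrable_const
  exact intervalIntegral.integral_eq_sub_of_hasDeriv_right_of_le hab
    ((continuous_fS z).continuousOn) hder hint



lemma vol_eq_sandwich {S : Set ℝ} {c d : ℝ} (h1 : Set.Ioo c d ⊆ S) (h2 : S ⊆ Set.Icc c d) :
    volume S = ENNReal.ofReal (d - c) := by
  apply le_antisymm
  · calc volume S ≤ volume (Set.Icc c d) := measure_mono h2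
      _ = ENNReal.ofReal (d - c) := Real.volume_Icc
  · calc ENNReal.ofReal (d - c) = volume (Set.Ioo c d) := Real.volume_Ioo.symm
      _ ≤ volume S := measure_mono h1

lemma toReal_ofReal_max (t : ℝ) : (ENNReal.ofReal t).toReal = max t 0 := by
  rcases le_or_gt t 0 with h | h
  · rw [ENNReal.ofReal_of_nonpos h, max_eq_right h]; simp
  · rw [ENNReal.toReal_ofReal h.le, max_eq_left h.le]

lemma vol_Ico_inter_Iic (c d zv : ℝ) :
    (volume (Set.Ico c d ∩ Set.Iic zv)).toReal = max (min d zv - c) 0 := by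
  rw [vol_eq_sandwich (S := Set.Ico c d ∩ Set.Iic zv) (c := c) (d := min d zv), toReal_ofReal_max]
  · intro w hw
    obtain ⟨h1, h2⟩ := hw
    exact ⟨⟨h1.le, lt_of_lt_of_le h2 (min_le_left _ _)⟩, le_trans h2.le (min_le_right _ _)⟩
  · intro w hw
    obtain ⟨⟨h1, h2⟩, h3⟩ := hw
    exact ⟨h1, le_min h2.le h3⟩

lemma ind_int (z a b : ℝ) (hab : a ≤ b) :
    ∫ w in a..b, Set.indicator (Set.Iio z) (fun _ => (1:ℝ)) w = max (min b z - a) 0 := by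
  rw [intervalIntegral.integral_of_le hab]
  rw [MeasureTheory.integral_indicator measurableSet_Iio]
  rw [Measure.restrict_restrict measurableSet_Iio]
  rw [MeasureTheory.integral_const]
  rw [smul_eq_mul, mul_one, measureReal_restrict_apply_univ, measureReal_def]
  rw [vol_eq_sandwich (S := Set.Iio z ∩ Set.Ioc a b) (c := a) (d := min b z), toReal_ofReal_max]
  · intro w hw
    obtain ⟨h1, h2⟩ := hw
    exact ⟨lt_of_lt_of_le h2 (min_le_right _ _), h1, le_of_lt (lt_of_lt_of_le h2 (min_le_left _ _))⟩
  · intro w hw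
    obtain ⟨h1, ⟨h2, h3⟩⟩ := hw
    exact ⟨h2.le, le_min h3 h1.le⟩

lemma hS_def (z w : ℝ) : hS z w = w * fS z w := rfl

/-- Telescoping sum over `Icc 1 m`. -/
lemma tele_sum (u : ℕ → ℝ) (m : ℕ) :
    ∑ n ∈ Finset.Icc 1 m, (u n - u (n + 1)) = u 1 - u (m + 1) := by
  induction m with
  | zero => simp
  | succ m ih =>
      rw [Finset.sum_Icc_succ_top (by omega), ih]
      ring

/-- Reindexing `n ↦ n+1`. -/
lemma reindex_sum (v : ℕ → ℝ) (m : ℕ) :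
    ∑ n ∈ Finset.Icc 1 m, v (n + 1) = ∑ i ∈ Finset.Icc 2 (m + 1), v i := by
  rw [show Finset.Icc 2 (m+1) = (Finset.Icc 1 m).map (addRightEmbedding 1) from by
    rw [Finset.map_add_right_Icc]]
  rw [Finset.sum_map]
  rfl

lemma front_split (v : ℕ → ℝ) (M : ℕ) (hM : 1 ≤ M) :
    ∑ i ∈ Finset.Icc 1 M, v i = v 1 + ∑ i ∈ Finset.Icc 2 M, v i := by
  rw [show Finset.Icc 2 M = Finset.Ioc 1 M from (Finset.Icc_add_one_left_eq_Ioc 1 M)]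
  rw [← Finset.Ioc_insert_left hM, Finset.sum_insert (by simp)]

/-- Kolmogorov bound for the zero-bias distribution: if `N > 100`, `x` is the unique strictly
decreasing zero-mean solution of the MIW recursion and `μ*` is the measure on `ℝ` with density
`p*(y) = S_n/(N-1)` for `y ∈ [x_{n+1}, x_n)` (and `0` outside `[x_N, x_1)`), then
`sup_z |μ*((-∞,z]) - Φ(z)| ≤ 52.5/N`. -/
theorem zero_bias_kolmogorov_bound (N : ℕ) (hN : 100 < N) (x : ℕ → ℝ)
    (hMIW : IsMIW N x) (hdec : ∀ n, 1 ≤ n → n < N → x (n + 1) < x n)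
    (hmean : ∑ i ∈ Finset.Icc 1 N, x i = 0)
    (p : ℝ → ℝ)
    (hp : ∀ n, 1 ≤ n → n ≤ N - 1 → ∀ y : ℝ, x (n + 1) ≤ y → y < x n →
      p y = Ssum x n / ((N : ℝ) - 1))
    (hp0 : ∀ y : ℝ, y < x N ∨ x 1 ≤ y → p y = 0)
    (μstar : Measure ℝ)
    (hμstar : μstar = volume.withDensity fun y => ENNReal.ofReal (p y)) :
    ∀ z : ℝ, |(μstar (Set.Iic z)).toReal - Phi z| ≤ 52.5 / (N : ℝ) := by
  intro z
  set K := Finset.Icc 1 (N - 1) with hK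
  have hNR : (101 : ℝ) ≤ (N : ℝ) := by exact_mod_cast hN
  have hN1 : (0 : ℝ) < (N : ℝ) - 1 := by linarith
  -- monotonicity of x on [1, N]
  have hmono : ∀ i j, 1 ≤ i → i ≤ j → j ≤ N → x j ≤ x i := by
    intro i j hi hij hjN
    induction j, hij using Nat.le_induction with
    | base => exact le_rfl
    | succ m hm ih =>
        have h1 : x (m + 1) < x m := hdec m (by omega) (by omega)
        exact le_trans h1.le (ih (by omega))
  -- basic facts about S_n for n ∈ K
  have hgap : ∀ n ∈ K, 0 < Ssum x n ∧ Ssum x n * (x n - x (n + 1)) = 1 := by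
    intro n hn
    obtain ⟨h1, h2⟩ := Finset.mem_Icc.1 hn
    obtain ⟨hS0, hrec⟩ := hMIW n h1 h2
    have hgap_eq : x n - x (n + 1) = 1 / Ssum x n := by rw [hrec]; ring
    have hpos : 0 < 1 / Ssum x n := by
      rw [← hgap_eq]
      have := hdec n h1 (by omega)
      linarith
    have hSpos : 0 < Ssum x n := by
      by_contra hc
      push_neg at hc
      have : 1 / Ssum x n ≤ 0 := by
        rcases eq_or_lt_of_le hc with h | h
        · rw [h]; simp
        · exact le_of_lt (div_neg_of_pos_of_neg one_pos h)
      linarith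
    refine ⟨hSpos, ?_⟩
    rw [hgap_eq, mul_one_div, div_self hS0]
  have hle : ∀ n ∈ K, x (n + 1) ≤ x n := by
    intro n hn
    obtain ⟨h1, h2⟩ := Finset.mem_Icc.1 hn
    exact (hdec n h1 (by omega)).le
  -- p equals the explicit step function
  have hq : ∀ y, p y = ∑ n ∈ K, Set.indicator (Set.Ico (x (n + 1)) (x n))
      (fun _ => Ssum x n / ((N : ℝ) - 1)) y := by
    intro y
    by_cases hy : y < x N ∨ x 1 ≤ y
    · rw [hp0 y hy]
      symm
      apply Finset.sum_eq_zero
      intro n hn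
      apply Set.indicator_of_notMem
      intro hmem
      obtain ⟨ha, hb⟩ := hmem
      obtain ⟨hn1, hn2⟩ := Finset.mem_Icc.1 hn
      rcases hy with hy | hy
      · have := hmono (n + 1) N (by omega) (by omega) le_rfl
        linarith
      · have h1n : x n ≤ x 1 := hmono 1 n le_rfl hn1 (by omega)
        linarith
    · push_neg at hy
      obtain ⟨hyN, hy1⟩ := hy
      set T := (Finset.Icc 1 N).filter (fun k => x k ≤ y) with hT
      have hTne : T.Nonempty :=
        ⟨N, Finset.mem_filter.2 ⟨Finset.mem_Icc.2 ⟨by omega, le_rfl⟩, hyN⟩⟩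
      set m := T.min' hTne with hm
      have hmT : m ∈ T := T.min'_mem hTne
      obtain ⟨hmIcc, hmy⟩ := Finset.mem_filter.1 hmT
      obtain ⟨hm1, hmN⟩ := Finset.mem_Icc.1 hmIcc
      have hm2 : 2 ≤ m := by
        by_contra hc
        push_neg at hc
        have hmeq : m = 1 := by omega
        rw [hmeq] at hmy
        linarith
      have hn1 : 1 ≤ m - 1 := by omega
      have hnN : m - 1 ≤ N - 1 := by omega
      have hnm : m - 1 + 1 = m := by omega
      have hxny : x (m - 1 + 1) ≤ y := by rw [hnm]; exact hmy
      have hyxn : y < x (m - 1) := by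
        by_contra hcon
        push_neg at hcon
        have hmem : m - 1 ∈ T := Finset.mem_filter.2
          ⟨Finset.mem_Icc.2 ⟨hn1, by omega⟩, hcon⟩
        have := T.min'_le (m - 1) hmem
        omega
      rw [hp (m - 1) hn1 hnN y hxny hyxn]
      symm
      rw [Finset.sum_eq_single_of_mem (m - 1) (Finset.mem_Icc.2 ⟨hn1, hnN⟩)]
      · exact Set.indicator_of_mem (Set.mem_Ico.mpr ⟨hxny, hyxn⟩) _
      · intro k hk hkn
        apply Set.indicator_of_notMem
        intro hmem
        obtain ⟨hk1, hk2⟩ := Finset.mem_Icc.1 hk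
        obtain ⟨ha, hb⟩ := hmem
        rcases Nat.lt_or_ge k (m - 1) with h | h
        · have hx1 : x (m - 1) ≤ x (k + 1) := hmono (k + 1) (m - 1) (by omega) (by omega) (by omega)
          linarith
        · have hkgt : m - 1 + 1 ≤ k := by omega
          have hx2 : x k ≤ x (m - 1 + 1) := hmono (m - 1 + 1) k (by omega) hkgt (by omega)
          linarith
  -- the measure of Iic z
  have hq_int : ∀ n ∈ K, Integrable
      (Set.indicator (Set.Ico (x (n + 1)) (x n)) (fun _ => Ssum x n / ((N : ℝ) - 1)))
      (volume.restrict (Set.Iic z)) := by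
    intro n hn
    apply Integrable.restrict
    exact (integrable_indicator_iff measurableSet_Ico).2
      (integrableOn_const measure_Ico_lt_top.ne)
  have hAtoreal : (μstar (Set.Iic z)).toReal
      = ∑ n ∈ K, (Ssum x n / ((N : ℝ) - 1)) * max (min (x n) z - x (n + 1)) 0 := by
    have hqfun_int : Integrable (fun y => ∑ n ∈ K, Set.indicator (Set.Ico (x (n + 1)) (x n))
        (fun _ => Ssum x n / ((N : ℝ) - 1)) y) (volume.restrict (Set.Iic z)) :=
      integrable_finset_sum K hq_int
    have hqfun_nn : 0 ≤ᵐ[volume.restrict (Set.Iic z)]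
        (fun y => ∑ n ∈ K, Set.indicator (Set.Ico (x (n + 1)) (x n))
        (fun _ => Ssum x n / ((N : ℝ) - 1)) y) := by
      apply Filter.Eventually.of_forall
      intro y
      apply Finset.sum_nonneg
      intro n hn
      apply Set.indicator_nonneg
      intro _ _
      exact div_nonneg (hgap n hn).1.le (by linarith)
    have h1 : μstar (Set.Iic z) = ENNReal.ofReal (∫ y in Set.Iic z,
        ∑ n ∈ K, Set.indicator (Set.Ico (x (n + 1)) (x n))
          (fun _ => Ssum x n / ((N : ℝ) - 1)) y) := by
      rw [hμstar, withDensity_apply _ measurableSet_Iic]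
      rw [show (fun y => ENNReal.ofReal (p y)) = fun y => ENNReal.ofReal
        (∑ n ∈ K, Set.indicator (Set.Ico (x (n + 1)) (x n))
          (fun _ => Ssum x n / ((N : ℝ) - 1)) y) from funext fun y => by rw [hq y]]
      rw [← MeasureTheory.ofReal_integral_eq_lintegral_ofReal hqfun_int hqfun_nn]
    rw [h1, ENNReal.toReal_ofReal (by
      apply integral_nonneg_of_ae hqfun_nn)]
    rw [MeasureTheory.integral_finset_sum K hq_int]
    apply Finset.sum_congr rfl
    intro n hn
    rw [MeasureTheory.integral_indicator measurableSet_Ico]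
    rw [Measure.restrict_restrict measurableSet_Ico]
    rw [MeasureTheory.integral_const, smul_eq_mul, measureReal_restrict_apply_univ, measureReal_def]
    rw [vol_Ico_inter_Iic]
    ring
  -- key identity
  have hcard : (K.card : ℝ) = (N : ℝ) - 1 := by
    rw [hK, Nat.card_Icc]
    have : N - 1 + 1 - 1 = N - 1 := by omega
    rw [this]
    push_cast [Nat.cast_sub (by omega : 1 ≤ N)]
    ring
  have hPhiz : ((N : ℝ) - 1) * Phi z = ∑ n ∈ K, Ssum x n * (x n - x (n + 1)) * Phi z := by
    have : ∀ n ∈ K, Ssum x n * (x n - x (n + 1)) * Phi z = Phi z := by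
      intro n hn
      rw [(hgap n hn).2, one_mul]
    rw [Finset.sum_congr rfl this, Finset.sum_const, nsmul_eq_mul, ← hcard]
  have hA : ((N : ℝ) - 1) * (μstar (Set.Iic z)).toReal
      = ∑ n ∈ K, Ssum x n * max (min (x n) z - x (n + 1)) 0 := by
    rw [hAtoreal, Finset.mul_sum]
    apply Finset.sum_congr rfl
    intro n hn
    field_simp
  -- per-interval Stein identity
  have hterm : ∀ n ∈ K,
      Ssum x n * max (min (x n) z - x (n + 1)) 0 - Ssum x n * (x n - x (n + 1)) * Phi z
      = Ssum x n * (fS z (x n) - fS z (x (n + 1))) -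
        Ssum x n * ∫ w in (x (n + 1))..(x n), hS z w := by
    intro n hn
    have hab : x (n + 1) ≤ x n := hle n hn
    have hftc := ftc_fS z (x (n + 1)) (x n) hab
    have hsplit : ∫ w in (x (n + 1))..(x n),
        (hS z w + Set.indicator (Set.Iio z) (fun _ => (1:ℝ)) w - Phi z)
        = (∫ w in (x (n + 1))..(x n), hS z w)
          + (max (min (x n) z - x (n + 1)) 0) - (x n - x (n + 1)) * Phi z := by
      rw [intervalIntegral.integral_sub (IntervalIntegrable.add
          ((continuous_hS z).intervalIntegrable _ _)
          (by
            rw [intervalIntegrable_iff]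
            exact (MeasureTheory.Integrable.indicator
              (integrableOn_const measure_Ioc_lt_top.ne) measurableSet_Iio)))
        (intervalIntegrable_const)]
      rw [intervalIntegral.integral_add ((continuous_hS z).intervalIntegrable _ _)
        (by
          rw [intervalIntegrable_iff]
          exact (MeasureTheory.Integrable.indicator
            (integrableOn_const measure_Ioc_lt_top.ne) measurableSet_Iio))]
      rw [ind_int z _ _ hab, intervalIntegral.integral_const, smul_eq_mul]
    rw [hsplit] at hftc
    linear_combination (Ssum x n) * hftc
  -- Abel summation
  have hAbel : ∑ n ∈ K, Ssum x n * (fS z (x n) - fS z (x (n + 1)))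
      = ∑ i ∈ Finset.Icc 1 N, hS z (x i) := by
    have hS_succ : ∀ n, Ssum x (n + 1) = Ssum x n + x (n + 1) := by
      intro n
      unfold Ssum
      rw [Finset.sum_Icc_succ_top (by omega)]
    have hterm2 : ∀ n ∈ K, Ssum x n * (fS z (x n) - fS z (x (n + 1)))
        = (Ssum x n * fS z (x n) - Ssum x (n + 1) * fS z (x (n + 1)))
          + x (n + 1) * fS z (x (n + 1)) := by
      intro n hn
      rw [hS_succ n]
      ring
    rw [Finset.sum_congr rfl hterm2, Finset.sum_add_distrib]
    rw [tele_sum (fun n => Ssum x n * fS z (x n)) (N - 1)]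
    have hNm1 : N - 1 + 1 = N := by omega
    rw [hNm1]
    have hSN : Ssum x N = 0 := hmean
    have hS1 : Ssum x 1 = x 1 := by unfold Ssum; simp
    rw [hSN, hS1, zero_mul, sub_zero]
    rw [show ∑ n ∈ K, x (n + 1) * fS z (x (n + 1))
        = ∑ i ∈ Finset.Icc 2 (N - 1 + 1), x i * fS z (x i) from
      reindex_sum (fun i => x i * fS z (x i)) (N - 1)]
    rw [hNm1]
    have hhs : ∑ i ∈ Finset.Icc 1 N, hS z (x i) = ∑ i ∈ Finset.Icc 1 N, x i * fS z (x i) :=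
      Finset.sum_congr rfl (fun i _ => hS_def z (x i))
    rw [hhs, front_split (fun i => x i * fS z (x i)) N (by omega)]
  -- the sandwich bounds
  have hlow : ∀ n ∈ K, hS z (x (n + 1)) ≤ Ssum x n * ∫ w in (x (n + 1))..(x n), hS z w := by
    intro n hn
    have hab := hle n hn
    have h1 : ∫ w in (x (n + 1))..(x n), hS z (x (n + 1)) ≤ ∫ w in (x (n + 1))..(x n), hS z w := by
      apply intervalIntegral.integral_mono_on hab intervalIntegrable_const
        ((continuous_hS z).intervalIntegrable _ _)
      intro w hw
      exact monotone_hS z hw.1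
    rw [intervalIntegral.integral_const, smul_eq_mul] at h1
    have h2 := mul_le_mul_of_nonneg_left h1 (hgap n hn).1.le
    calc hS z (x (n + 1)) = (Ssum x n * (x n - x (n + 1))) * hS z (x (n + 1)) := by
          rw [(hgap n hn).2]; ring
      _ = Ssum x n * ((x n - x (n + 1)) * hS z (x (n + 1))) := by ring
      _ ≤ Ssum x n * ∫ w in (x (n + 1))..(x n), hS z w := h2
  have hhigh : ∀ n ∈ K, Ssum x n * (∫ w in (x (n + 1))..(x n), hS z w) ≤ hS z (x n) := by
    intro n hn
    have hab := hle n hn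
    have h1 : ∫ w in (x (n + 1))..(x n), hS z w ≤ ∫ w in (x (n + 1))..(x n), hS z (x n) := by
      apply intervalIntegral.integral_mono_on hab
        ((continuous_hS z).intervalIntegrable _ _) intervalIntegrable_const
      intro w hw
      exact monotone_hS z hw.2
    rw [intervalIntegral.integral_const, smul_eq_mul] at h1
    have h2 := mul_le_mul_of_nonneg_left h1 (hgap n hn).1.le
    calc Ssum x n * (∫ w in (x (n + 1))..(x n), hS z w)
        ≤ Ssum x n * ((x n - x (n + 1)) * hS z (x n)) := h2
      _ = (Ssum x n * (x n - x (n + 1))) * hS z (x n) := by ring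
      _ = hS z (x n) := by rw [(hgap n hn).2]; ring
  -- assemble
  have hkey : ((N : ℝ) - 1) * ((μstar (Set.Iic z)).toReal - Phi z)
      = (∑ i ∈ Finset.Icc 1 N, hS z (x i))
        - ∑ n ∈ K, Ssum x n * ∫ w in (x (n + 1))..(x n), hS z w := by
    rw [mul_sub, hA, hPhiz, ← Finset.sum_sub_distrib]
    rw [Finset.sum_congr rfl hterm]
    rw [Finset.sum_sub_distrib, hAbel]
  have hupper : ((N : ℝ) - 1) * ((μstar (Set.Iic z)).toReal - Phi z) ≤ 1 := by
    rw [hkey]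
    have h1 : ∑ n ∈ K, hS z (x (n + 1)) ≤ ∑ n ∈ K, Ssum x n * ∫ w in (x (n + 1))..(x n), hS z w :=
      Finset.sum_le_sum hlow
    have h2 : ∑ n ∈ K, hS z (x (n + 1)) = ∑ i ∈ Finset.Icc 2 N, hS z (x i) := by
      have hNm1 : N - 1 + 1 = N := by omega
      rw [reindex_sum (fun i => hS z (x i)) (N - 1), hNm1]
    have h3 : ∑ i ∈ Finset.Icc 1 N, hS z (x i)
        = hS z (x 1) + ∑ i ∈ Finset.Icc 2 N, hS z (x i) :=
      front_split (fun i => hS z (x i)) N (by omega)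
    calc (∑ i ∈ Finset.Icc 1 N, hS z (x i))
          - ∑ n ∈ K, Ssum x n * ∫ w in (x (n + 1))..(x n), hS z w
        ≤ (∑ i ∈ Finset.Icc 1 N, hS z (x i)) - ∑ n ∈ K, hS z (x (n + 1)) := by linarith
      _ = hS z (x 1) := by rw [h2, h3]; ring
      _ ≤ 1 := hS_le_one z (x 1)
  have hlower : -1 ≤ ((N : ℝ) - 1) * ((μstar (Set.Iic z)).toReal - Phi z) := by
    rw [hkey]
    have h1 : ∑ n ∈ K, Ssum x n * (∫ w in (x (n + 1))..(x n), hS z w) ≤ ∑ n ∈ K, hS z (x n) :=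
      Finset.sum_le_sum hhigh
    have h3 : ∑ i ∈ Finset.Icc 1 N, hS z (x i)
        = (∑ n ∈ K, hS z (x n)) + hS z (x N) := by
      have hNm1 : N - 1 + 1 = N := by omega
      rw [hK, ← hNm1]
      rw [Finset.sum_Icc_succ_top (by omega) (fun i => hS z (x i))]
      rw [hNm1]
    calc (-1 : ℝ) ≤ hS z (x N) := neg_one_le_hS z (x N)
      _ ≤ (∑ i ∈ Finset.Icc 1 N, hS z (x i)) - ∑ n ∈ K, Ssum x n
            * ∫ w in (x (n + 1))..(x n), hS z w := by
          rw [h3]; linarith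
  -- conclude
  have h1 : (μstar (Set.Iic z)).toReal - Phi z ≤ 1 / ((N : ℝ) - 1) := by
    rw [le_div_iff₀ hN1]
    nlinarith [hupper]
  have h2 : -(1 / ((N : ℝ) - 1)) ≤ (μstar (Set.Iic z)).toReal - Phi z := by
    rw [neg_le, le_div_iff₀ hN1]
    nlinarith [hlower]
  have habs : |(μstar (Set.Iic z)).toReal - Phi z| ≤ 1 / ((N : ℝ) - 1) :=
    abs_le.2 ⟨h2, h1⟩
  have hfin : 1 / ((N : ℝ) - 1) ≤ 52.5 / (N : ℝ) := by
    rw [div_le_div_iff₀ hN1 (by linarith : (0:ℝ) < (N : ℝ))]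
    nlinarith [hNR]
  exact le_trans habs hfin

end
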